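/- For λ₂ > 0, the limit Laplace transform of the rescaled horohull boundary, L(λ₂) = (1 + √λ₂)^{-3}, is the Laplace transform of a probability distribution on (0,∞); equivalently, setting λ₁ → 0 in the joint horohull scaling-limit formula F(λ₁,λ₂) = [ (2/3 + λ₂/√(6λ₁))^{-1/2} sinh((6λ₁)^{1/4}) + cosh((6λ₁)^{1/4}) ] / [ (2/3 + λ₂/√(6λ₁))^{1/2} sinh((6λ₁)^{1/4}) + cosh((6λ₁)^{1/4}) ]³ gives lim_{λ₁→0⁺} F(λ₁,λ₂) = (1+√λ₂)^{-3} for every fixed λ₂ > 0. -/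

import Mathlib

open Real Filter Set MeasureTheory

noncomputable def Fhoro (l1 l2 : ℝ) : ℝ :=
  ((2 / 3 + l2 / Real.sqrt (6 * l1)) ^ (-(1 / 2 : ℝ)) *
      Real.sinh ((6 * l1) ^ (1 / 4 : ℝ)) + Real.cosh ((6 * l1) ^ (1 / 4 : ℝ))) /
    ((2 / 3 + l2 / Real.sqrt (6 * l1)) ^ ((1 / 2 : ℝ)) *
        Real.sinh ((6 * l1) ^ (1 / 4 : ℝ)) + Real.cosh ((6 * l1) ^ (1 / 4 : ℝ))) ^ 3

lemma glasser {c : ℝ} (hc : 0 ≤ c) :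
    ∫ x in Ioi (0:ℝ), Real.exp (-(x - c/x)^2) = Real.sqrt π / 2 := by
  rcases eq_or_lt_of_le hc with rfl | hc
  · have : ∀ x ∈ Ioi (0:ℝ), Real.exp (-(x - 0/x)^2) = Real.exp (-1 * x^2) := by
      intro x hx; norm_num
    rw [setIntegral_congr_fun measurableSet_Ioi this, integral_gaussian_Ioi]
    norm_num
  · set φ : ℝ → ℝ := fun x => x - c/x with hφ
    set φ' : ℝ → ℝ := fun x => 1 + c/x^2 with hφ'
    have hder : ∀ x ∈ Ioi (0:ℝ), HasDerivWithinAt φ (φ' x) (Ioi 0) x := by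
      intro x hx
      have hx0 : x ≠ 0 := ne_of_gt hx
      have : HasDerivAt φ (1 - c * (-(x^2)⁻¹)) x := by
        have h : HasDerivAt (fun y => y - c * y⁻¹) (1 - c * (-(x^2)⁻¹)) x :=
          (hasDerivAt_id' x).sub ((hasDerivAt_inv hx0).const_mul c)
        simpa only [hφ, div_eq_mul_inv] using h
      have h2 : 1 - c * (-(x^2)⁻¹) = φ' x := by simp only [hφ']; ring
      exact (h2 ▸ this).hasDerivWithinAt
    have hinj : InjOn φ (Ioi 0) := by
      apply StrictMonoOn.injOn
      intro x hx y hy hxy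
      have : c / y < c / x := div_lt_div_of_pos_left hc hx hxy
      simp only [hφ]
      linarith
    have himg : φ '' (Ioi 0) = univ := by
      apply eq_univ_of_forall
      intro y
      set s := Real.sqrt (y^2 + 4*c) with hs
      have hs2 : s^2 = y^2 + 4*c := Real.sq_sqrt (by positivity)
      have hsy : -y < s := by
        rcases le_or_gt 0 y with h | h
        · have : 0 < s := Real.sqrt_pos.2 (by positivity)
          linarith
        · have : |y| < s := by
            rw [← Real.sqrt_sq_eq_abs]
            exact Real.sqrt_lt_sqrt (by positivity) (by linarith)
          rw [abs_of_neg h] at this; linarith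
      have hxpos : (0:ℝ) < (y + s)/2 := by linarith
      refine ⟨(y + s)/2, hxpos, ?_⟩
      have hx0 : (y + s)/2 ≠ 0 := ne_of_gt hxpos
      have hys : y + s ≠ 0 := by intro h; rw [h] at hxpos; simp at hxpos
      simp only [hφ]
      field_simp
      nlinarith [hs2]
    have hgauss : Integrable (fun y : ℝ => Real.exp (-y^2)) := by
      have := integrable_exp_neg_mul_sq (one_pos (α := ℝ))
      simpa using this
    have hsub : ∫ y : ℝ, Real.exp (-y^2) =
        ∫ x in Ioi (0:ℝ), |φ' x| • Real.exp (-(φ x)^2) := by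
      rw [← integral_image_eq_integral_abs_deriv_smul measurableSet_Ioi hder hinj
        (fun y => Real.exp (-y^2)), himg, Measure.restrict_univ]
    have hint_sum : IntegrableOn (fun x => |φ' x| • Real.exp (-(φ x)^2)) (Ioi 0) := by
      rw [← integrableOn_image_iff_integrableOn_abs_deriv_smul measurableSet_Ioi hder hinj
        (fun y => Real.exp (-y^2)), himg]
      exact hgauss.integrableOn
    have habs : ∀ x ∈ Ioi (0:ℝ),
        |φ' x| • Real.exp (-(φ x)^2) = (1 + c/x^2) * Real.exp (-(x - c/x)^2) := by
      intro x hx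
      have hx' : (0:ℝ) < x := hx
      rw [smul_eq_mul, abs_of_pos (by positivity)]
    have hint_sum' : IntegrableOn
        (fun x => (1 + c/x^2) * Real.exp (-(x - c/x)^2)) (Ioi 0) :=
      hint_sum.congr_fun habs measurableSet_Ioi
    have hmeas1 : AEStronglyMeasurable (fun x : ℝ => Real.exp (-(x - c/x)^2))
        (volume.restrict (Ioi 0)) :=
      (Real.measurable_exp.comp
        (((measurable_id.sub (measurable_const.div measurable_id)).pow_const 2).neg)).aestronglyMeasurable
    have hintI : IntegrableOn (fun x : ℝ => Real.exp (-(x - c/x)^2)) (Ioi 0) := by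
      apply Integrable.mono' hint_sum' hmeas1
      filter_upwards [ae_restrict_mem measurableSet_Ioi] with x hx
      have hx' : (0:ℝ) < x := hx
      rw [Real.norm_eq_abs, abs_of_pos (Real.exp_pos _)]
      nlinarith [Real.exp_pos (-(x - c/x)^2), div_nonneg hc.le (sq_nonneg x)]
    have hmeas2 : AEStronglyMeasurable (fun x : ℝ => (c/x^2) * Real.exp (-(x - c/x)^2))
        (volume.restrict (Ioi 0)) :=
      ((measurable_const.div (measurable_id.pow_const 2)).mul
        (Real.measurable_exp.comp
          (((measurable_id.sub (measurable_const.div measurable_id)).pow_const 2).neg))).aestronglyMeasurable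
    have hintJ : IntegrableOn (fun x : ℝ => (c/x^2) * Real.exp (-(x - c/x)^2)) (Ioi 0) := by
      apply Integrable.mono' hint_sum' hmeas2
      filter_upwards [ae_restrict_mem measurableSet_Ioi] with x hx
      have hx' : (0:ℝ) < x := hx
      rw [Real.norm_eq_abs, abs_of_pos (by positivity)]
      nlinarith [Real.exp_pos (-(x - c/x)^2)]
    set I := ∫ x in Ioi (0:ℝ), Real.exp (-(x - c/x)^2) with hI
    set J := ∫ x in Ioi (0:ℝ), (c/x^2) * Real.exp (-(x - c/x)^2) with hJ
    have hIJ : I = J := by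
      set ψ : ℝ → ℝ := fun x => c/x with hψ
      set ψ' : ℝ → ℝ := fun x => -(c/x^2) with hψ'
      have hderψ : ∀ x ∈ Ioi (0:ℝ), HasDerivWithinAt ψ (ψ' x) (Ioi 0) x := by
        intro x hx
        have hx0 : x ≠ 0 := ne_of_gt hx
        have : HasDerivAt ψ (c * (-(x^2)⁻¹)) x := by
          simpa [hψ, div_eq_mul_inv] using (hasDerivAt_inv hx0).const_mul c
        have h2 : c * (-(x^2)⁻¹) = ψ' x := by simp only [hψ']; ring
        exact (h2 ▸ this).hasDerivWithinAt
      have hinjψ : InjOn ψ (Ioi 0) := by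
        intro x hx y hy h
        rw [div_eq_div_iff (ne_of_gt hx) (ne_of_gt hy)] at h
        exact (mul_left_cancel₀ (ne_of_gt hc) h).symm
      have himgψ : ψ '' (Ioi 0) = Ioi 0 := by
        ext y
        constructor
        · rintro ⟨x, hx, rfl⟩; exact div_pos hc hx
        · intro hy
          refine ⟨c/y, div_pos hc hy, ?_⟩
          show c/(c/y) = y
          rw [div_div_eq_mul_div, mul_comm, mul_div_assoc, div_self (ne_of_gt hc), mul_one]
      have := integral_image_eq_integral_abs_deriv_smul measurableSet_Ioi hderψ hinjψ
        (fun y => Real.exp (-(y - c/y)^2))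
      rw [himgψ] at this
      rw [hI, this, hJ]
      apply setIntegral_congr_fun measurableSet_Ioi
      intro x hx
      have hx' : (0:ℝ) < x := hx
      have h1 : ψ x = c / x := rfl
      have h2 : c / (c/x) = x := by field_simp
      show |ψ' x| • Real.exp (-(ψ x - c / ψ x)^2) = c / x^2 * Real.exp (-(x - c/x)^2)
      rw [smul_eq_mul, h1, h2]
      have h3 : |ψ' x| = c/x^2 := by
        rw [hψ', abs_neg, abs_of_pos (by positivity)]
      rw [h3]
      congr 1
      ring_nf
    have hsplit : ∫ x in Ioi (0:ℝ), (1 + c/x^2) * Real.exp (-(x - c/x)^2) = I + J := by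
      rw [hI, hJ, ← integral_add hintI hintJ]
      apply setIntegral_congr_fun measurableSet_Ioi
      intro x hx
      ring
    have hgval : ∫ y : ℝ, Real.exp (-y^2) = Real.sqrt π := by
      have := integral_gaussian (1:ℝ)
      simpa using this
    have heq : Real.sqrt π = I + J := by
      rw [← hgval, hsub, setIntegral_congr_fun measurableSet_Ioi habs, hsplit]
    rw [hIJ] at heq ⊢
    linarith

lemma stable_integrand_integrable {a l : ℝ} (hl : 0 ≤ l) :
    IntegrableOn (fun u : ℝ => 2/Real.sqrt π * Real.exp (-(u^2 + l*a^2/(4*u^2)))) (Ioi 0) := by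
  have hπ : (0:ℝ) < Real.sqrt π := Real.sqrt_pos.2 Real.pi_pos
  have hg : IntegrableOn (fun u : ℝ => 2/Real.sqrt π * Real.exp (-1*u^2)) (Ioi 0) :=
    ((integrable_exp_neg_mul_sq one_pos).const_mul _).integrableOn
  apply Integrable.mono' hg
  · exact (measurable_const.mul (Real.measurable_exp.comp
      (((measurable_id.pow_const 2).add
        (measurable_const.div (measurable_const.mul (measurable_id.pow_const 2)))).neg))).aestronglyMeasurable
  · filter_upwards [ae_restrict_mem measurableSet_Ioi] with u hu
    have hu' : (0:ℝ) < u := hu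
    rw [Real.norm_eq_abs, abs_of_pos (by positivity)]
    have h1 : 0 ≤ l*a^2/(4*u^2) := by positivity
    have h2 : -(u^2 + l*a^2/(4*u^2)) ≤ -1*u^2 := by nlinarith
    exact mul_le_mul_of_nonneg_left (Real.exp_le_exp.2 h2) (by positivity)

lemma stable_transform {a l : ℝ} (ha : 0 < a) (hl : 0 ≤ l) :
    ∫ u in Ioi (0:ℝ), 2/Real.sqrt π * Real.exp (-(u^2 + l*a^2/(4*u^2)))
      = Real.exp (-(a * Real.sqrt l)) := by
  set c := a * Real.sqrt l / 2 with hc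
  have hc0 : 0 ≤ c := by positivity
  have hptw : ∀ u ∈ Ioi (0:ℝ),
      2/Real.sqrt π * Real.exp (-(u^2 + l*a^2/(4*u^2)))
        = (2/Real.sqrt π * Real.exp (-(a * Real.sqrt l))) * Real.exp (-(u - c/u)^2) := by
    intro u hu
    have hu' : (0:ℝ) < u := hu
    have hsq : (Real.sqrt l)^2 = l := Real.sq_sqrt hl
    have h4 : c^2 = l * a^2 / 4 := by
      rw [hc, div_pow, mul_pow, hsq]; ring
    have h5 : (u - c/u)^2 = u^2 - 2*c + c^2/u^2 := by
      field_simp; ring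
    have : u^2 + l*a^2/(4*u^2) = (u - c/u)^2 + a * Real.sqrt l := by
      rw [h5, h4, hc]; ring
    rw [this, neg_add, Real.exp_add]
    ring
  rw [setIntegral_congr_fun measurableSet_Ioi hptw, integral_const_mul, glasser hc0]
  have hπ : Real.sqrt π ≠ 0 := ne_of_gt (Real.sqrt_pos.2 Real.pi_pos)
  field_simp

noncomputable def gdens (p : ℝ × ℝ) : ℝ :=
  if 0 < p.1 ∧ 0 < p.2 then (p.1^2/2 * Real.exp (-p.1)) * (2/Real.sqrt π * Real.exp (-p.2^2))
  else 0

lemma gdens_nonneg (p : ℝ × ℝ) : 0 ≤ gdens p := by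
  unfold gdens
  split
  · positivity
  · exact le_refl 0

lemma gdens_meas : Measurable gdens := by
  apply Measurable.ite
  · exact (measurableSet_lt measurable_const measurable_fst).inter
      (measurableSet_lt measurable_const measurable_snd)
  · exact (((measurable_fst.pow_const 2).div_const 2).mul
      (Real.measurable_exp.comp measurable_fst.neg)).mul
      (measurable_const.mul (Real.measurable_exp.comp ((measurable_snd.pow_const 2).neg)))
  · exact measurable_const

noncomputable def Tmap (p : ℝ × ℝ) : ℝ := (p.1/(2*p.2))^2

lemma Tmap_meas : Measurable Tmap :=
  (measurable_fst.div (measurable_const.mul measurable_snd)).pow_const 2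

lemma key_lintegral (l : ℝ) (hl : 0 ≤ l) :
    ∫⁻ x, ENNReal.ofReal (Real.exp (-l * x))
        ∂((volume.withDensity (fun p => ENNReal.ofReal (gdens p))).map Tmap)
      = ENNReal.ofReal ((1 + Real.sqrt l)⁻¹ ^ 3) := by
  have hb : (0:ℝ) < 1 + Real.sqrt l := by positivity
  have hmexp : Measurable fun x : ℝ => ENNReal.ofReal (Real.exp (-l * x)) :=
    ENNReal.measurable_ofReal.comp (Real.measurable_exp.comp (measurable_id.const_mul (-l)))
  have hm2 : Measurable fun p : ℝ × ℝ => ENNReal.ofReal (Real.exp (-l * Tmap p)) :=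
    (Real.measurable_exp.comp (Tmap_meas.const_mul (-l))).ennreal_ofReal
  rw [lintegral_map hmexp Tmap_meas,
    lintegral_withDensity_eq_lintegral_mul volume
      (gdens_meas.ennreal_ofReal) hm2]
  have hmul_meas : Measurable fun p : ℝ × ℝ =>
      ENNReal.ofReal (gdens p) * ENNReal.ofReal (Real.exp (-l * Tmap p)) :=
    (gdens_meas.ennreal_ofReal).mul hm2
  rw [Measure.volume_eq_prod]
  simp only [Pi.mul_apply]
  rw [show (fun p : ℝ × ℝ => (ENNReal.ofReal (gdens p)) * ENNReal.ofReal (Real.exp (-l * Tmap p)))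
      = fun p => ENNReal.ofReal (gdens p) * ENNReal.ofReal (Real.exp (-l * Tmap p)) from rfl] at hmul_meas
  rw [lintegral_prod _ hmul_meas.aemeasurable]
  have inner : ∀ a : ℝ,
      (∫⁻ u, ENNReal.ofReal (gdens (a, u)) * ENNReal.ofReal (Real.exp (-l * Tmap (a, u))))
        = (Ioi (0:ℝ)).indicator
            (fun a => ENNReal.ofReal (a^2/2 * Real.exp (-((1 + Real.sqrt l) * a)))) a := by
    intro a
    rcases le_or_gt a 0 with ha | ha
    · rw [indicator_of_notMem (by simpa using ha)]
      have : ∀ u : ℝ, ENNReal.ofReal (gdens (a, u)) * ENNReal.ofReal (Real.exp (-l * Tmap (a, u))) = 0 := by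
        intro u
        have : gdens (a, u) = 0 := by
          unfold gdens
          rw [if_neg]
          push_neg
          intro h
          exact absurd h (not_lt.2 ha)
        rw [this, ENNReal.ofReal_zero, zero_mul]
      simp only [this, lintegral_zero]
    · rw [indicator_of_mem (by exact ha)]
      have hfun : (fun u : ℝ => ENNReal.ofReal (gdens (a, u)) * ENNReal.ofReal (Real.exp (-l * Tmap (a, u))))
          = (Ioi (0:ℝ)).indicator (fun u =>
              ENNReal.ofReal ((a^2/2 * Real.exp (-a)) *
                (2/Real.sqrt π * Real.exp (-(u^2 + l*a^2/(4*u^2)))))) := by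
        funext u
        rcases le_or_gt u 0 with hu | hu
        · rw [indicator_of_notMem (by simpa using hu)]
          have : gdens (a, u) = 0 := by
            unfold gdens
            rw [if_neg]
            push_neg
            exact fun _ => hu
          rw [this, ENNReal.ofReal_zero, zero_mul]
        · rw [indicator_of_mem (by exact hu)]
          have hg : gdens (a, u) = (a^2/2 * Real.exp (-a)) * (2/Real.sqrt π * Real.exp (-u^2)) := by
            unfold gdens
            rw [if_pos ⟨ha, hu⟩]
          rw [hg, ← ENNReal.ofReal_mul (by positivity)]
          congr 1
          have hT : Tmap (a, u) = a^2/(4*u^2) := by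
            unfold Tmap
            rw [div_pow, mul_pow]
            norm_num
          rw [hT]
          rw [show -(u^2 + l*a^2/(4*u^2)) = -u^2 + (-l * (a^2/(4*u^2))) by ring, Real.exp_add]
          ring
      rw [hfun]
      refine Eq.trans (lintegral_indicator measurableSet_Ioi _) ?_
      have : ∀ u ∈ Ioi (0:ℝ),
          ENNReal.ofReal ((a^2/2 * Real.exp (-a)) * (2/Real.sqrt π * Real.exp (-(u^2 + l*a^2/(4*u^2)))))
            = ENNReal.ofReal (a^2/2 * Real.exp (-a)) *
              ENNReal.ofReal (2/Real.sqrt π * Real.exp (-(u^2 + l*a^2/(4*u^2)))) := by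
        intro u hu
        rw [ENNReal.ofReal_mul (by positivity)]
      rw [setLIntegral_congr_fun measurableSet_Ioi this,
        lintegral_const_mul' _ _ ENNReal.ofReal_ne_top]
      rw [← MeasureTheory.ofReal_integral_eq_lintegral_ofReal (stable_integrand_integrable hl)
        (ae_of_all _ fun u => by positivity)]
      rw [stable_transform ha hl, ← ENNReal.ofReal_mul (by positivity)]
      congr 1
      rw [mul_assoc, ← Real.exp_add]
      congr 2
      ring
  simp_rw [inner]
  rw [lintegral_indicator measurableSet_Ioi]
  have hint : IntegrableOn (fun a : ℝ => a^2/2 * Real.exp (-((1 + Real.sqrt l) * a))) (Ioi 0) := by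
    have h0 := integrableOn_rpow_mul_exp_neg_mul_rpow (s := 2) (p := 1) (by norm_num) (by norm_num) hb
    have h1 : IntegrableOn (fun a : ℝ => a^2 * Real.exp (-((1 + Real.sqrt l) * a))) (Ioi 0) := by
      refine h0.congr_fun (fun x hx => ?_) measurableSet_Ioi
      dsimp only
      rw [show (2:ℝ) = ((2:ℕ):ℝ) by norm_num, Real.rpow_natCast, Real.rpow_one, neg_mul]
    exact IntegrableOn.congr_fun (h1.div_const 2) (fun x hx => by ring) measurableSet_Ioi
  rw [← MeasureTheory.ofReal_integral_eq_lintegral_ofReal hint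
    (ae_of_all _ fun a => by positivity)]
  congr 1
  have h3 := Real.integral_rpow_mul_exp_neg_mul_Ioi (a := 3) (by norm_num) hb
  have heq : ∀ t ∈ Ioi (0:ℝ), t^((3:ℝ)-1) * Real.exp (-((1 + Real.sqrt l)*t))
      = t^2 * Real.exp (-((1 + Real.sqrt l)*t)) := by
    intro t ht
    rw [show (3:ℝ)-1 = ((2:ℕ):ℝ) by norm_num, Real.rpow_natCast]
  rw [setIntegral_congr_fun measurableSet_Ioi heq] at h3
  have hsplit : ∀ t : ℝ, t^2/2 * Real.exp (-((1 + Real.sqrt l)*t))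
      = (1/2) * (t^2 * Real.exp (-((1 + Real.sqrt l)*t))) := fun t => by ring
  simp_rw [hsplit]
  rw [integral_const_mul, h3]
  have hΓ : Real.Gamma 3 = 2 := by
    rw [show (3:ℝ) = ((2:ℕ):ℝ)+1 by norm_num, Real.Gamma_nat_eq_factorial]
    norm_num
  rw [hΓ]
  rw [show (1/(1 + Real.sqrt l)) = (1 + Real.sqrt l)⁻¹ by rw [one_div]]
  rw [show (3:ℝ) = ((3:ℕ):ℝ) by norm_num, Real.rpow_natCast]
  ring

noncomputable def μhoro : Measure ℝ :=
  (volume.withDensity fun p => ENNReal.ofReal (gdens p)).map Tmap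

lemma μhoro_prob : IsProbabilityMeasure μhoro := by
  constructor
  have h := key_lintegral 0 le_rfl
  simp only [neg_zero, zero_mul, Real.exp_zero, ENNReal.ofReal_one, Real.sqrt_zero, add_zero,
    inv_one, one_pow] at h
  rw [lintegral_one] at h
  exact h

lemma μhoro_Iic : μhoro (Iic 0) = 0 := by
  rw [μhoro, Measure.map_apply Tmap_meas measurableSet_Iic,
    withDensity_apply _ (Tmap_meas measurableSet_Iic)]
  have hz : ∀ p ∈ Tmap ⁻¹' (Iic 0), ENNReal.ofReal (gdens p) = 0 := by
    intro p hp
    have : gdens p = 0 := by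
      unfold gdens
      rw [if_neg]
      rintro ⟨h1, h2⟩
      have : 0 < Tmap p := by
        unfold Tmap
        positivity
      exact absurd (mem_Iic.1 hp) (not_le.2 this)
    rw [this, ENNReal.ofReal_zero]
  rw [setLIntegral_congr_fun (Tmap_meas measurableSet_Iic) hz, lintegral_zero]

lemma μhoro_laplace {l : ℝ} (hl : 0 < l) :
    ∫ x, Real.exp (-l * x) ∂μhoro = (1 + Real.sqrt l)⁻¹ ^ 3 := by
  have hmeas : AEStronglyMeasurable (fun x : ℝ => Real.exp (-l * x)) μhoro :=
    (Real.continuous_exp.comp (continuous_const.mul continuous_id)).aestronglyMeasurable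
  rw [integral_eq_lintegral_of_nonneg_ae (ae_of_all _ fun x => (Real.exp_pos _).le) hmeas]
  have h := key_lintegral l hl.le
  rw [show ((volume.withDensity fun p => ENNReal.ofReal (gdens p)).map Tmap) = μhoro from rfl] at h
  rw [h, ENNReal.toReal_ofReal (by positivity)]

lemma part1 {l2 : ℝ} (h2 : 0 < l2) :
    Filter.Tendsto (fun l1 => Fhoro l1 l2) (nhdsWithin 0 (Set.Ioi 0))
      (nhds ((1 + Real.sqrt l2)⁻¹ ^ 3)) := by
  have hsl2 : 0 < Real.sqrt l2 := Real.sqrt_pos.2 h2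
  set G : ℝ → ℝ := fun t =>
    ((t / Real.sqrt (2/3*t^2 + l2)) * Real.sinh t + Real.cosh t) /
      (Real.sqrt (2/3*t^2 + l2) * (Real.sinh t / t) + Real.cosh t) ^ 3 with hG
  have hsqrt : Tendsto (fun t : ℝ => Real.sqrt (2/3*t^2 + l2)) (nhdsWithin 0 (Ioi 0))
      (nhds (Real.sqrt l2)) := by
    have hcont : Continuous fun t : ℝ => Real.sqrt (2/3*t^2 + l2) := by
      exact Real.continuous_sqrt.comp (by continuity)
    have := (hcont.tendsto 0).mono_left (nhdsWithin_le_nhds (s := Ioi (0:ℝ)))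
    simpa using this
  have hsinhq : Tendsto (fun t : ℝ => Real.sinh t / t) (nhdsWithin 0 (Ioi 0)) (nhds 1) := by
    have h := (Real.hasDerivAt_sinh (0:ℝ))
    rw [hasDerivAt_iff_tendsto_slope] at h
    have hmono : nhdsWithin (0:ℝ) (Ioi 0) ≤ nhdsWithin 0 {(0:ℝ)}ᶜ :=
      nhdsWithin_mono _ (fun x hx => ne_of_gt hx)
    have h' := h.mono_left hmono
    rw [Real.cosh_zero] at h'
    refine h'.congr fun t => ?_
    rw [slope_def_field, Real.sinh_zero, sub_zero, sub_zero]
  have htdiv : Tendsto (fun t : ℝ => t / Real.sqrt (2/3*t^2 + l2)) (nhdsWithin 0 (Ioi 0))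
      (nhds 0) := by
    have h0 : Tendsto (fun t : ℝ => t) (nhdsWithin 0 (Ioi 0)) (nhds 0) :=
      (continuous_id.tendsto 0).mono_left nhdsWithin_le_nhds
    have := h0.div hsqrt (ne_of_gt hsl2)
    rw [zero_div] at this; exact this
  have hsinh0 : Tendsto Real.sinh (nhdsWithin (0:ℝ) (Ioi 0)) (nhds 0) := by
    have := (Real.continuous_sinh.tendsto 0).mono_left (nhdsWithin_le_nhds (s := Ioi (0:ℝ)))
    simpa using this
  have hcosh0 : Tendsto Real.cosh (nhdsWithin (0:ℝ) (Ioi 0)) (nhds 1) := by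
    have := (Real.continuous_cosh.tendsto 0).mono_left (nhdsWithin_le_nhds (s := Ioi (0:ℝ)))
    simpa using this
  have hN : Tendsto (fun t : ℝ => (t / Real.sqrt (2/3*t^2 + l2)) * Real.sinh t + Real.cosh t)
      (nhdsWithin 0 (Ioi 0)) (nhds 1) := by
    have := (htdiv.mul hsinh0).add hcosh0
    simpa using this
  have hD : Tendsto (fun t : ℝ => Real.sqrt (2/3*t^2 + l2) * (Real.sinh t / t) + Real.cosh t)
      (nhdsWithin 0 (Ioi 0)) (nhds (1 + Real.sqrt l2)) := by
    have := (hsqrt.mul hsinhq).add hcosh0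
    rw [mul_one] at this
    rw [add_comm]
    exact this
  have hGlim : Tendsto G (nhdsWithin 0 (Ioi 0)) (nhds ((1 + Real.sqrt l2)⁻¹ ^ 3)) := by
    have := hN.div (hD.pow 3) (pow_ne_zero 3 (by positivity))
    rw [hG]
    convert this using 2
    · rfl
    rw [inv_pow, one_div]
  have hu : Tendsto (fun l1 : ℝ => (6*l1) ^ (1/4:ℝ)) (nhdsWithin 0 (Ioi 0))
      (nhdsWithin 0 (Ioi 0)) := by
    rw [tendsto_nhdsWithin_iff]
    constructor
    · have hc : ContinuousAt (fun x : ℝ => x ^ (1/4:ℝ)) 0 :=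
        Real.continuousAt_rpow_const 0 (1/4) (Or.inr (by norm_num))
      have h6 : Tendsto (fun l1 : ℝ => 6 * l1) (nhds (0:ℝ)) (nhds 0) := by
        simpa using (continuous_mul_left (6:ℝ)).tendsto (0:ℝ)
      have h14 : Tendsto (fun x : ℝ => x ^ (1/4:ℝ)) (nhds 0) (nhds 0) := by
        have := hc.tendsto
        rwa [show ((0:ℝ) ^ (1/4:ℝ)) = 0 from Real.zero_rpow (by norm_num)] at this
      exact (h14.comp h6).mono_left nhdsWithin_le_nhds
    · filter_upwards [self_mem_nhdsWithin] with l1 hl1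
      exact Real.rpow_pos_of_pos (by linarith [mem_Ioi.1 hl1]) _
  refine (hGlim.comp hu).congr' ?_
  filter_upwards [self_mem_nhdsWithin] with l1 hl1
  have h6 : (0:ℝ) < 6 * l1 := by linarith [mem_Ioi.1 hl1]
  set t := (6*l1) ^ (1/4:ℝ) with htdef
  have ht : 0 < t := Real.rpow_pos_of_pos h6 _
  have ht2 : Real.sqrt (6*l1) = t^2 := by
    rw [htdef, ← Real.rpow_natCast ((6*l1) ^ (1/4:ℝ)) 2, ← Real.rpow_mul h6.le,
      Real.sqrt_eq_rpow]
    norm_num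
  have hbase : (0:ℝ) < 2/3 + l2 / t^2 := by positivity
  have hkey : (2/3 + l2 / t^2 : ℝ) ^ ((1/2:ℝ)) = Real.sqrt (2/3*t^2 + l2) / t := by
    rw [← Real.sqrt_eq_rpow]
    rw [show (2/3 + l2 / t^2 : ℝ) = (2/3*t^2 + l2) / t^2 by field_simp]
    rw [Real.sqrt_div (by positivity) (t^2), Real.sqrt_sq ht.le]
  have hkey2 : (2/3 + l2 / t^2 : ℝ) ^ (-(1/2:ℝ)) = t / Real.sqrt (2/3*t^2 + l2) := by
    rw [Real.rpow_neg hbase.le, hkey, inv_div]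
  show G t = Fhoro l1 l2
  rw [hG]
  unfold Fhoro
  rw [ht2]
  rw [show (6*l1) ^ (1/4:ℝ) = t from rfl, hkey, hkey2]
  ring

theorem horohull_perimeter_laplace_limit :
    (∀ l2 : ℝ, 0 < l2 →
      Filter.Tendsto (fun l1 => Fhoro l1 l2) (nhdsWithin 0 (Set.Ioi 0))
        (nhds ((1 + Real.sqrt l2)⁻¹ ^ 3))) ∧
    ∃ μ : Measure ℝ, IsProbabilityMeasure μ ∧ μ (Set.Iic 0) = 0 ∧
      ∀ l2 : ℝ, 0 < l2 →
        ∫ x, Real.exp (-l2 * x) ∂μ = (1 + Real.sqrt l2)⁻¹ ^ 3 := by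
  exact ⟨fun l2 h2 => part1 h2, μhoro, μhoro_prob, μhoro_Iic, fun l2 h2 => μhoro_laplace h2⟩
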